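/- arXiv:2509.26202 — 4 statements merged into one kernel-verified Lean document; each statement's English description precedes it below -/
import Mathlib

section
/- Let A = A_s + A_d ε be a dual tensor of order m and dimension n, λ = λ_s + λ_d ε a dual number, and x = x_s + x_d ε a dual vector. Then A x^{m−1} = λ x^{[m−1]} holds (as dual vectors) if and only if A_s x_s^{m−1} = λ_s x_s^{[m−1]} and M x_d = (A_d − λ_d I) x_s^{m−1}, where M = (m−1) λ_s diag(x_s)^{m−2} − Σ_{k=2}^m A^{(k)} with (A^{(k)})_{ij} = Σ (A_s)_{i i₂…i_{k−1} j i_{k+1}…i_m} ∏_{l≠1,k} (x_s)_{i_l}. -/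
open Matrix

/-- For an order (q+2), dimension n tensor `T` over a commutative (semi)ring and a
vector `x`, `tapply T x i = (T x^{m-1})_i = ∑ a_{i i₂ … i_m} x_{i₂} ⋯ x_{i_m}`. -/
def tapply {R : Type*} [CommSemiring R] {n q : ℕ}
    (T : (Fin (q + 2) → Fin n) → R) (x : Fin n → R) (i : Fin n) : R :=
  ∑ g : Fin (q + 1) → Fin n, T (Fin.cons i g) * ∏ l, x (g l)

/-- The matrix A^{(k)} of Theorem 3.1 (k indexed by the m−1 tail positions):
(A^{(k)})_{ij} = ∑_{i₂,…,i_m, i_k = j} a_{i i₂ … i_m} ∏_{l ∉ {1,k}} x_{i_l}. -/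
def Ak {n q : ℕ} (T : (Fin (q + 2) → Fin n) → ℝ) (x : Fin n → ℝ)
    (k : Fin (q + 1)) : Matrix (Fin n) (Fin n) ℝ :=
  Matrix.of fun i j =>
    ∑ g ∈ Finset.univ.filter (fun g : Fin (q + 1) → Fin n => g k = j),
      T (Fin.cons i g) * ∏ l ∈ Finset.univ.erase k, x (g l)

/-- The matrix M = (m−1) λ_s diag(x_s)^{m−2} − ∑_{k=2}^m A^{(k)} of Theorem 3.1
(order m = q+2). -/
noncomputable def Mmat {n q : ℕ} (T : (Fin (q + 2) → Fin n) → ℝ) (x : Fin n → ℝ)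
    (ls : ℝ) : Matrix (Fin n) (Fin n) ℝ :=
  ((q : ℝ) + 1) • ls • (Matrix.diagonal x) ^ q - ∑ k : Fin (q + 1), Ak T x k

/-- A tensor is weakly irreducible if its associated digraph, with an arc (i,j)
whenever some entry a_{i i₂ … i_m} ≠ 0 with j among i₂,…,i_m, is strongly
connected. -/
def WeaklyIrreducible {n q : ℕ} (T : (Fin (q + 2) → Fin n) → ℝ) : Prop :=
  ∀ i j : Fin n, Relation.ReflTransGen
    (fun a b => ∃ g : Fin (q + 1) → Fin n, T (Fin.cons a g) ≠ 0 ∧ ∃ l, g l = b) i j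
open TrivSqZeroExt

/-! Since `ε² = 0`, the `ε`-part of a product of dual numbers follows the Leibniz rule, one
factor's `ε`-part at a time. Hence the real part of `A x^{m−1}` is `A_s x_s^{m−1}`, and its
`ε`-part is `A_d x_s^{m−1}` plus the derivative `∑_k A^{(k)} x_d` of `x ↦ A_s x^{m−1}` at `x_s`
in direction `x_d`; likewise the `ε`-part of `λ x^{[m−1]}` is
`λ_d x_s^{[m−1]} + (m−1) λ_s diag(x_s)^{m−2} x_d`. Comparing parts gives the two equations. -/

namespace TrivSqZeroExt

theorem fst_prod {ι R M : Type*} [CommSemiring R] [AddCommMonoid M] [Module R M]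
    [Module Rᵐᵒᵖ M] [IsCentralScalar R M] (s : Finset ι) (f : ι → TrivSqZeroExt R M) :
    (∏ i ∈ s, f i).fst = ∏ i ∈ s, (f i).fst :=
  map_prod (fstHom R R M) f s

theorem snd_prod {ι R M : Type*} [DecidableEq ι] [CommSemiring R] [AddCommMonoid M] [Module R M]
    [Module Rᵐᵒᵖ M] [IsCentralScalar R M] (s : Finset ι) (f : ι → TrivSqZeroExt R M) :
    (∏ i ∈ s, f i).snd = ∑ i ∈ s, (∏ j ∈ s.erase i, (f j).fst) • (f i).snd := by
  induction s using Finset.induction_on with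
  | empty => simp
  | insert a s ha ih =>
    rw [Finset.prod_insert ha, snd_mul, ih, fst_prod, Finset.sum_insert ha, Finset.erase_insert ha,
      op_smul_eq_smul, Finset.smul_sum, add_comm]
    congr 1
    refine Finset.sum_congr rfl fun i hi => ?_
    rw [Finset.erase_insert_of_ne (ne_of_mem_of_not_mem hi ha).symm,
      Finset.prod_insert fun h => ha (Finset.mem_of_mem_erase h), smul_smul]

end TrivSqZeroExt

section TensorApply

variable {n q : ℕ}

theorem fst_tapply {R M : Type*} [CommSemiring R] [AddCommMonoid M] [Module R M]
    [Module Rᵐᵒᵖ M] [IsCentralScalar R M] (T : (Fin (q + 2) → Fin n) → TrivSqZeroExt R M)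
    (x : Fin n → TrivSqZeroExt R M) (i : Fin n) :
    (tapply T x i).fst = tapply (fun f => (T f).fst) (fun j => (x j).fst) i := by
  simp only [tapply, fst_sum, fst_mul, fst_prod]

theorem snd_tapply {R : Type*} [CommSemiring R] (T : (Fin (q + 2) → Fin n) → DualNumber R)
    (x : Fin n → DualNumber R) (i : Fin n) :
    (tapply T x i).snd = tapply (fun f => (T f).snd) (fun j => (x j).fst) i +
      ∑ g : Fin (q + 1) → Fin n, (T (Fin.cons i g)).fst *
        ∑ k, (∏ l ∈ Finset.univ.erase k, (x (g l)).fst) * (x (g k)).snd := by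
  simp only [tapply, snd_sum, snd_mul, snd_prod, fst_prod, smul_eq_mul, op_smul_eq_smul,
    Finset.sum_add_distrib, add_comm (∑ g, (T _).fst * _)]
  exact congrArg (· + _) (Finset.sum_congr rfl fun g _ => mul_comm _ _)

theorem Ak_mulVec_apply (T : (Fin (q + 2) → Fin n) → ℝ) (x y : Fin n → ℝ) (k : Fin (q + 1))
    (i : Fin n) :
    (Ak T x k *ᵥ y) i = ∑ g : Fin (q + 1) → Fin n,
      T (Fin.cons i g) * ((∏ l ∈ Finset.univ.erase k, x (g l)) * y (g k)) := by
  calc (Ak T x k *ᵥ y) i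
      = ∑ j, ∑ g ∈ Finset.univ.filter (fun g : Fin (q + 1) → Fin n => g k = j),
          T (Fin.cons i g) * ((∏ l ∈ Finset.univ.erase k, x (g l)) * y (g k)) := by
        simp only [mulVec, dotProduct, Ak, of_apply, Finset.sum_mul]
        refine Finset.sum_congr rfl fun j _ => Finset.sum_congr rfl fun g hg => ?_
        rw [(Finset.mem_filter.mp hg).2, mul_assoc]
    _ = _ := Finset.sum_fiberwise _ _ _

theorem sum_Ak_mulVec_apply (T : (Fin (q + 2) → Fin n) → ℝ) (x y : Fin n → ℝ) (i : Fin n) :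
    ((∑ k, Ak T x k) *ᵥ y) i = ∑ g : Fin (q + 1) → Fin n,
      T (Fin.cons i g) * ∑ k, (∏ l ∈ Finset.univ.erase k, x (g l)) * y (g k) := by
  simp only [sum_mulVec, Finset.sum_apply, Ak_mulVec_apply, Finset.mul_sum]
  exact Finset.sum_comm

theorem Mmat_mulVec_apply (T : (Fin (q + 2) → Fin n) → ℝ) (x y : Fin n → ℝ) (ls : ℝ)
    (i : Fin n) :
    (Mmat T x ls *ᵥ y) i = ((q : ℝ) + 1) * ls * x i ^ q * y i - ((∑ k, Ak T x k) *ᵥ y) i := by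
  simp [Mmat, sub_mulVec, smul_mulVec, diagonal_pow, mulVec_diagonal, mul_assoc]

end TensorApply

/-- For a dual tensor A = A_s + A_d ε of order m = q+2, dual number
λ = λ_s + λ_d ε and dual vector x = x_s + x_d ε: A x^{m−1} = λ x^{[m−1]} iff
A_s x_s^{m−1} = λ_s x_s^{[m−1]} and M x_d = (A_d − λ_d I) x_s^{m−1}, with M as in
Theorem 3.1. -/
theorem stmt8 {n q : ℕ} (Ts Td : (Fin (q + 2) → Fin n) → ℝ)
    (ls ld : ℝ) (xs xd : Fin n → ℝ) :
    (tapply (fun f => (inl (Ts f) + inr (Td f) : DualNumber ℝ))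
        (fun i => inl (xs i) + inr (xd i)) =
      fun i => (inl ls + inr ld) * (inl (xs i) + inr (xd i)) ^ (q + 1))
    ↔ ((tapply Ts xs = fun i => ls * xs i ^ (q + 1)) ∧
        (Mmat Ts xs ls).mulVec xd = fun i => tapply Td xs i - ld * xs i ^ (q + 1)) := by
  simp only [funext_iff, TrivSqZeroExt.ext_iff, forall_and]
  refine and_congr (by simp [fst_tapply]) (forall_congr' fun i => ?_)
  rw [snd_tapply, Mmat_mulVec_apply, sum_Ak_mulVec_apply]
  simp only [fst_add, fst_inl, fst_inr, snd_add, snd_inl, snd_inr, snd_mul, fst_pow, snd_pow,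
    add_zero, zero_add, smul_eq_mul, op_smul_eq_smul, nsmul_eq_mul, Nat.pred_succ]
  push_cast
  constructor <;> intro h <;> linarith
end

section
/- Let A_s be a weakly irreducible nonnegative tensor of order m and dimension n, with positive eigenvalue λ_s (the spectral radius) and positive eigenvector x_s: A_s x_s^{m−1} = λ_s x_s^{[m−1]}. Then the matrix M = (m−1) λ_s diag(x_s)^{m−2} − Σ_{k=2}^m A^{(k)} is an irreducible singular M-matrix with Ker(M) = { c x_s : c ∈ ℝ } and rank(M) = n − 1. -/
open Matrix

/-!
`M` is a Z-matrix whose off-diagonal pattern is the digraph of `A_s`, hence strongly connected,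
and since `∑ₖ A^{(k)} x_s = (m-1) A_s x_s^{m-1} = (m-1) λ_s x_s^{[m-1]}` it annihilates the
positive vector `x_s`. A Z-matrix killing a positive vector is a singular M-matrix: for
`B = s I - M ≥ 0` we get `B x_s = s x_s`, and a positive eigenvector of a nonnegative matrix
belongs to its spectral radius. If moreover `M` is irreducible, then for `v ∈ Ker M` and
`c = minᵢ vᵢ / (x_s)ᵢ` the vector `v - c x_s` is nonnegative, lies in the kernel and vanishes
somewhere; row `a` of `M (v - c x_s) = 0` shows that a zero at `a` propagates along every arc
out of `a`, so `v = c x_s`.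
-/

namespace Matrix

variable {ι : Type*} [Fintype ι]

section Spectrum

variable [DecidableEq ι]

lemma mem_spectrum_iff_exists_mulVec_eq_smul {K : Type*} [Field K] {A : Matrix ι ι K}
    {μ : K} :
    μ ∈ spectrum K A ↔ ∃ v ≠ 0, A *ᵥ v = μ • v := by
  rw [spectrum.mem_iff, isUnit_iff_isUnit_det, isUnit_iff_ne_zero, not_not,
    ← exists_mulVec_eq_zero_iff, Algebra.algebraMap_eq_smul_one]
  simp only [sub_mulVec, smul_mulVec, one_mulVec, sub_eq_zero, eq_comm]

lemma norm_le_of_mem_spectrum_of_mulVec_eq_smul {B : Matrix ι ι ℝ}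
    (hB : ∀ i j, 0 ≤ B i j) {x : ι → ℝ} (hx : ∀ i, 0 < x i) {s : ℝ} (hBx : B *ᵥ x = s • x) {μ : ℂ}
    (hμ : μ ∈ spectrum ℂ (B.map Complex.ofReal)) : ‖μ‖ ≤ s := by
  obtain ⟨z, hz, hBz⟩ := mem_spectrum_iff_exists_mulVec_eq_smul.1 hμ
  obtain ⟨i₁, hi₁⟩ := Function.ne_iff.1 hz
  obtain ⟨i₀, -, hi₀⟩ := Finset.exists_max_image Finset.univ (fun i => ‖z i‖ / x i)
    ⟨i₁, Finset.mem_univ _⟩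
  set t := ‖z i₀‖ / x i₀
  have hz_le (j : ι) : ‖z j‖ ≤ t * x j := (div_le_iff₀ (hx j)).1 (hi₀ j (Finset.mem_univ j))
  have ht : t * x i₀ = ‖z i₀‖ := div_mul_cancel₀ _ (hx i₀).ne'
  have ht₀ : 0 < t :=
    (div_pos (norm_pos_iff.2 hi₁) (hx i₁)).trans_le (hi₀ i₁ (Finset.mem_univ _))
  refine le_of_mul_le_mul_right ?_ (ht ▸ mul_pos ht₀ (hx i₀))
  calc ‖μ‖ * ‖z i₀‖ = ‖∑ j, (B i₀ j : ℂ) * z j‖ := by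
        rw [← norm_mul, ← smul_eq_mul, ← Pi.smul_apply μ z i₀, ← hBz]; rfl
    _ ≤ ∑ j, B i₀ j * ‖z j‖ := by
        refine (norm_sum_le _ _).trans_eq (Finset.sum_congr rfl fun j _ => ?_)
        rw [norm_mul, Complex.norm_real, Real.norm_of_nonneg (hB i₀ j)]
    _ ≤ ∑ j, B i₀ j * (t * x j) := by gcongr with j; exacts [hB i₀ j, hz_le j]
    _ = t * (B *ᵥ x) i₀ := by
        rw [mulVec, dotProduct, Finset.mul_sum]
        exact Finset.sum_congr rfl fun j _ => by ring
    _ = s * ‖z i₀‖ := by rw [hBx, Pi.smul_apply, smul_eq_mul, ← ht]; ring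

lemma ofReal_mem_spectrum_map_of_mulVec_eq_smul {B : Matrix ι ι ℝ} {x : ι → ℝ}
    (hx : x ≠ 0) {s : ℝ} (hBx : B *ᵥ x = s • x) : (s : ℂ) ∈ spectrum ℂ (B.map Complex.ofReal) := by
  refine mem_spectrum_iff_exists_mulVec_eq_smul.2 ⟨fun i => x i, ?_, ?_⟩
  · exact fun h => hx (funext fun i => Complex.ofReal_injective (congrFun h i))
  · ext i
    have := congrArg Complex.ofReal (congrFun hBx i)
    simpa [mulVec, dotProduct] using this

lemma sSup_norm_spectrum_eq_of_mulVec_eq_smul [Nonempty ι] {B : Matrix ι ι ℝ}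
    (hB : ∀ i j, 0 ≤ B i j) {x : ι → ℝ} (hx : ∀ i, 0 < x i) {s : ℝ} (hBx : B *ᵥ x = s • x) :
    sSup {r : ℝ | ∃ μ ∈ spectrum ℂ (B.map Complex.ofReal), ‖μ‖ = r} = s := by
  have hs := ofReal_mem_spectrum_map_of_mulVec_eq_smul
    (Function.ne_iff.2 ⟨Classical.arbitrary ι, (hx _).ne'⟩) hBx
  have hbound := fun μ => norm_le_of_mem_spectrum_of_mulVec_eq_smul (μ := μ) hB hx hBx
  have hs₀ : ‖(s : ℂ)‖ = s := by
    rw [Complex.norm_real, Real.norm_eq_abs, abs_eq_self]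
    exact (norm_nonneg _).trans (hbound _ hs)
  refine IsGreatest.csSup_eq ⟨⟨s, hs, hs₀⟩, ?_⟩
  rintro r ⟨μ, hμ, rfl⟩
  exact hbound μ hμ

lemma exists_eq_spectralRadius_smul_one_sub_of_mulVec_eq_zero {M : Matrix ι ι ℝ}
    (hM : ∀ i j, i ≠ j → M i j ≤ 0) {x : ι → ℝ} (hx : ∀ i, 0 < x i) (hMx : M *ᵥ x = 0) :
    ∃ (s : ℝ) (B : Matrix ι ι ℝ), (∀ i j, 0 ≤ B i j) ∧
      s = sSup {r : ℝ | ∃ μ ∈ spectrum ℂ (B.map Complex.ofReal), ‖μ‖ = r} ∧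
      M = s • 1 - B := by
  set s := ∑ i, |M i i|
  have hB : ∀ i j, 0 ≤ (s • 1 - M) i j := by
    intro i j
    rcases eq_or_ne i j with rfl | hij
    · simpa using (le_abs_self _).trans (Finset.single_le_sum (fun j _ => abs_nonneg (M j j))
        (Finset.mem_univ i))
    · simpa [hij] using hM i j hij
  refine ⟨s, s • 1 - M, hB, ?_, (sub_sub_cancel _ _).symm⟩
  rcases isEmpty_or_nonempty ι
  · simp [s, spectrum.of_subsingleton]
  · refine (sSup_norm_spectrum_eq_of_mulVec_eq_smul hB hx ?_).symm
    rw [sub_mulVec, hMx, smul_mulVec, one_mulVec, sub_zero]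

end Spectrum

lemma apply_eq_zero_of_mulVec_eq_zero {M : Matrix ι ι ℝ} (hM : ∀ i j, i ≠ j → M i j ≤ 0)
    {w : ι → ℝ} (hw : ∀ i, 0 ≤ w i) (hMw : M *ᵥ w = 0) {a b : ι} (ha : w a = 0)
    (hMab : M a b ≠ 0) : w b = 0 := by
  have hterm : ∀ j ∈ Finset.univ, M a j * w j ≤ 0 := fun j _ => by
    rcases eq_or_ne a j with rfl | haj
    · simp [ha]
    · exact mul_nonpos_of_nonpos_of_nonneg (hM a j haj) (hw j)
  have hsum : ∑ j, M a j * w j = 0 := congrFun hMw a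
  have := (Finset.sum_eq_zero_iff_of_nonpos hterm).1 hsum b (Finset.mem_univ b)
  exact (mul_eq_zero.1 this).resolve_left hMab

lemma mulVec_eq_zero_iff_exists_eq_smul {M : Matrix ι ι ℝ} (hM : ∀ i j, i ≠ j → M i j ≤ 0)
    (hirr : ∀ i j, Relation.ReflTransGen (fun a b => a ≠ b ∧ M a b ≠ 0) i j)
    {x : ι → ℝ} (hx : ∀ i, 0 < x i) (hMx : M *ᵥ x = 0) (v : ι → ℝ) :
    M *ᵥ v = 0 ↔ ∃ c : ℝ, v = c • x := by
  refine ⟨fun hv => ?_, fun ⟨c, hc⟩ => by rw [hc, mulVec_smul, hMx, smul_zero]⟩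
  rcases isEmpty_or_nonempty ι
  · exact ⟨0, Subsingleton.elim _ _⟩
  obtain ⟨i₀, -, hi₀⟩ := Finset.exists_min_image Finset.univ (fun i => v i / x i)
    Finset.univ_nonempty
  set c := v i₀ / x i₀
  set w := v - c • x
  have hw (i : ι) : 0 ≤ w i := by
    simpa [w, sub_nonneg] using (le_div_iff₀ (hx i)).1 (hi₀ i (Finset.mem_univ i))
  have hMw : M *ᵥ w = 0 := by rw [mulVec_sub, mulVec_smul, hv, hMx, smul_zero, sub_zero]
  have hw₀ : w i₀ = 0 := by simp [w, c, div_mul_cancel₀ _ (hx i₀).ne']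
  refine ⟨c, funext fun j => sub_eq_zero.1 ?_⟩
  induction hirr i₀ j with
  | refl => exact hw₀
  | tail _ hab ih => exact apply_eq_zero_of_mulVec_eq_zero hM hw hMw ih hab.2

lemma rank_eq_card_sub_one_of_mulVec_eq_zero_iff {K : Type*} [Field K] {M : Matrix ι ι K}
    {x : ι → K} (hx : x ≠ 0) (hker : ∀ v, M *ᵥ v = 0 ↔ ∃ c : K, v = c • x) :
    M.rank = Fintype.card ι - 1 := by
  have hker' : LinearMap.ker M.mulVecLin = K ∙ x := by
    ext v
    simp only [LinearMap.mem_ker, mulVecLin_apply, hker, Submodule.mem_span_singleton, eq_comm]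
  have := LinearMap.finrank_range_add_finrank_ker M.mulVecLin
  rw [hker', finrank_span_singleton hx, Module.finrank_fintype_fun_eq_card] at this
  exact Nat.eq_sub_of_add_eq this

end Matrix

section Tensor

variable {n q : ℕ} (T : (Fin (q + 2) → Fin n) → ℝ) (x : Fin n → ℝ)

lemma Ak_apply_nonneg (hT : ∀ f, 0 ≤ T f) (hx : ∀ i, 0 ≤ x i) (k : Fin (q + 1)) (i j : Fin n) :
    0 ≤ Ak T x k i j :=
  Finset.sum_nonneg fun _ _ => mul_nonneg (hT _) (Finset.prod_nonneg fun _ _ => hx _)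

lemma sum_Ak_apply_pos (hT : ∀ f, 0 ≤ T f) (hx : ∀ i, 0 < x i) {i j : Fin n}
    (hij : ∃ g : Fin (q + 1) → Fin n, T (Fin.cons i g) ≠ 0 ∧ ∃ l, g l = j) :
    0 < (∑ k, Ak T x k) i j := by
  obtain ⟨g, hg, l, rfl⟩ := hij
  have hl : 0 < Ak T x l i (g l) :=
    Finset.sum_pos' (fun _ _ => mul_nonneg (hT _) (Finset.prod_nonneg fun _ _ => (hx _).le))
      ⟨g, by simp, mul_pos ((hT _).lt_of_ne' hg) (Finset.prod_pos fun _ _ => hx _)⟩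
  rw [Matrix.sum_apply]
  exact hl.trans_le (Finset.single_le_sum
    (fun k _ => Ak_apply_nonneg T x hT (fun i => (hx i).le) k i (g l)) (Finset.mem_univ l))

lemma Ak_mulVec_self (k : Fin (q + 1)) : Ak T x k *ᵥ x = tapply T x := by
  ext i
  simp only [mulVec, dotProduct, Ak, of_apply, tapply, Finset.sum_mul]
  rw [← Finset.sum_fiberwise Finset.univ (fun g : Fin (q + 1) → Fin n => g k)]
  refine Finset.sum_congr rfl fun j _ => Finset.sum_congr rfl fun g hg => ?_
  rw [(Finset.mem_filter.1 hg).2.symm, mul_assoc, Finset.prod_erase_mul _ _ (Finset.mem_univ k)]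

lemma sum_Ak_mulVec_self : (∑ k, Ak T x k) *ᵥ x = ((q : ℝ) + 1) • tapply T x := by
  rw [sum_mulVec]
  simp only [Ak_mulVec_self, Finset.sum_const, Finset.card_univ, Fintype.card_fin]
  rw [← Nat.cast_smul_eq_nsmul ℝ, Nat.cast_succ]

lemma Mmat_apply_of_ne (ls : ℝ) {i j : Fin n} (hij : i ≠ j) :
    Mmat T x ls i j = -(∑ k, Ak T x k) i j := by
  simp [Mmat, diagonal_pow, hij]

lemma Mmat_mulVec_self (ls : ℝ) (heig : tapply T x = fun i => ls * x i ^ (q + 1)) :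
    Mmat T x ls *ᵥ x = 0 := by
  ext i
  simp only [Mmat, sub_mulVec, smul_mulVec, sum_Ak_mulVec_self, heig, diagonal_pow,
    mulVec_diagonal, Pi.sub_apply, Pi.smul_apply, Pi.pow_apply, smul_eq_mul, Pi.zero_apply]
  ring

lemma Mmat_apply_nonpos_of_ne (hT : ∀ f, 0 ≤ T f) (hx : ∀ i, 0 ≤ x i) (ls : ℝ) (i j : Fin n)
    (hij : i ≠ j) : Mmat T x ls i j ≤ 0 := by
  rw [Mmat_apply_of_ne T x ls hij, Matrix.sum_apply, neg_nonpos]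
  exact Finset.sum_nonneg fun k _ => Ak_apply_nonneg T x hT hx k i j

lemma Mmat_reflTransGen (hT : ∀ f, 0 ≤ T f) (hwi : WeaklyIrreducible T) (hx : ∀ i, 0 < x i)
    (ls : ℝ) (i j : Fin n) :
    Relation.ReflTransGen (fun a b => a ≠ b ∧ Mmat T x ls a b ≠ 0) i j := by
  induction hwi i j with
  | refl => rfl
  | @tail b c _ hbc ih =>
    rcases eq_or_ne b c with rfl | hne
    · exact ih
    · refine ih.tail ⟨hne, ?_⟩
      rw [Mmat_apply_of_ne T x ls hne, neg_ne_zero]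
      exact (sum_Ak_apply_pos T x hT hx hbc).ne'

end Tensor

theorem stmt10_general {n q : ℕ} (Ts : (Fin (q + 2) → Fin n) → ℝ)
    (hnn : ∀ f, 0 ≤ Ts f) (hwi : WeaklyIrreducible Ts)
    (ls : ℝ) (xs : Fin n → ℝ) (hxs : ∀ i, 0 < xs i)
    (heig : tapply Ts xs = fun i => ls * xs i ^ (q + 1)) :
    (∀ i j : Fin n, Relation.ReflTransGen
        (fun a b => a ≠ b ∧ Mmat Ts xs ls a b ≠ 0) i j) ∧
    (∃ (s : ℝ) (B : Matrix (Fin n) (Fin n) ℝ), (∀ i j, 0 ≤ B i j) ∧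
        s = sSup {r : ℝ | ∃ μ ∈ spectrum ℂ (B.map Complex.ofReal), ‖μ‖ = r} ∧
        Mmat Ts xs ls = s • (1 : Matrix (Fin n) (Fin n) ℝ) - B) ∧
    (∀ v : Fin n → ℝ, (Mmat Ts xs ls).mulVec v = 0 ↔ ∃ c : ℝ, v = c • xs) ∧
    (Mmat Ts xs ls).rank = n - 1 := by
  have hZ := Mmat_apply_nonpos_of_ne Ts xs hnn (fun i => (hxs i).le) ls
  have hMx := Mmat_mulVec_self Ts xs ls heig
  have hirr := Mmat_reflTransGen Ts xs hnn hwi hxs ls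
  have hker := mulVec_eq_zero_iff_exists_eq_smul hZ hirr hxs hMx
  refine ⟨hirr, exists_eq_spectralRadius_smul_one_sub_of_mulVec_eq_zero hZ hxs hMx, hker, ?_⟩
  obtain rfl | hn := n.eq_zero_or_pos
  · -- the target `0 - 1` truncates to `0`
    exact Nat.le_zero.1 ((rank_le_card_width _).trans_eq (Fintype.card_fin 0))
  · simpa using rank_eq_card_sub_one_of_mulVec_eq_zero_iff
      (fun h => (hxs ⟨0, hn⟩).ne' (congrFun h _)) hker

/-- If A_s is a weakly irreducible nonnegative tensor with
positive eigenvalue λ_s (the spectral radius) and positive eigenvector x_s, then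
M = (m−1) λ_s diag(x_s)^{m−2} − ∑ A^{(k)} is an irreducible singular M-matrix with
Ker(M) = {c x_s : c ∈ ℝ} and rank(M) = n − 1. -/
theorem stmt10 {n q : ℕ} (Ts : (Fin (q + 2) → Fin n) → ℝ)
    (hnn : ∀ f, 0 ≤ Ts f) (hwi : WeaklyIrreducible Ts)
    (ls : ℝ) (xs : Fin n → ℝ) (hls : 0 < ls) (hxs : ∀ i, 0 < xs i)
    (heig : tapply Ts xs = fun i => ls * xs i ^ (q + 1))
    (hmax : ∀ μ : ℂ, (∃ z : Fin n → ℂ, z ≠ 0 ∧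
        tapply (fun f => (Ts f : ℂ)) z = fun i => μ * z i ^ (q + 1)) →
      ‖μ‖ ≤ ls) :
    (∀ i j : Fin n, Relation.ReflTransGen
        (fun a b => a ≠ b ∧ Mmat Ts xs ls a b ≠ 0) i j) ∧
    (∃ (s : ℝ) (B : Matrix (Fin n) (Fin n) ℝ), (∀ i j, 0 ≤ B i j) ∧
        s = sSup {r : ℝ | ∃ μ ∈ spectrum ℂ (B.map Complex.ofReal), ‖μ‖ = r} ∧
        Mmat Ts xs ls = s • (1 : Matrix (Fin n) (Fin n) ℝ) - B) ∧
    (∀ v : Fin n → ℝ, (Mmat Ts xs ls).mulVec v = 0 ↔ ∃ c : ℝ, v = c • xs) ∧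
    (Mmat Ts xs ls).rank = n - 1 :=
  stmt10_general Ts hnn hwi ls xs hxs heig
end

section
/- With the setup of Theorem 3.2, suppose λ = λ_s + λ_d ε has a positive dual eigenvector x = x_s + x_d ε, and (x_s)_i = (x_s)_j for indices i, j. Then (x_d)_i − (x_d)_j = (e_i − e_j)ᵀ M# (A_d − λ_d I) x_s^{m−1} = (e_i − e_j)ᵀ M^{(1)} (A_d − λ_d I) x_s^{m−1} for any {1}-inverse M^{(1)} of M; in particular this difference is independent of the choice of {1}-inverse. -/
open Matrix

open TrivSqZeroExt

lemma fst_prod' {ι : Type*} (s : Finset ι) (f : ι → DualNumber ℝ) :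
    (∏ l ∈ s, f l).fst = ∏ l ∈ s, (f l).fst :=
  map_prod (fstHom ℝ ℝ ℝ) f s

lemma snd_prod' {ι : Type*} [DecidableEq ι] (s : Finset ι) (f : ι → DualNumber ℝ) :
    (∏ l ∈ s, f l).snd = ∑ k ∈ s, (f k).snd * ∏ l ∈ s.erase k, (f l).fst := by
  induction s using Finset.induction_on with
  | empty => simp
  | @insert a s ha ih =>
    rw [Finset.prod_insert ha, Finset.sum_insert ha, TrivSqZeroExt.snd_mul, ih,
      Finset.erase_insert ha, fst_prod']
    simp only [op_smul_eq_smul, smul_eq_mul, Finset.mul_sum]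
    rw [add_comm]
    congr 1
    · exact mul_comm _ _
    · refine Finset.sum_congr rfl fun k hk => ?_
      have hka : k ≠ a := fun h => ha (h ▸ hk)
      rw [Finset.erase_insert_of_ne hka.symm,
        Finset.prod_insert (fun h => ha (Finset.mem_of_mem_erase h))]
      ring

lemma tapply_dual_fst {n q : ℕ} (Ts Td : (Fin (q + 2) → Fin n) → ℝ)
    (xs xd : Fin n → ℝ) (a : Fin n) :
    (tapply (fun f => (inl (Ts f) + inr (Td f) : DualNumber ℝ))
      (fun i => inl (xs i) + inr (xd i)) a).fst = tapply Ts xs a := by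
  simp only [tapply, fst_sum, fst_mul, fst_prod', fst_add, fst_inl, fst_inr, add_zero]

lemma tapply_dual_snd {n q : ℕ} (Ts Td : (Fin (q + 2) → Fin n) → ℝ)
    (xs xd : Fin n → ℝ) (a : Fin n) :
    (tapply (fun f => (inl (Ts f) + inr (Td f) : DualNumber ℝ))
      (fun i => inl (xs i) + inr (xd i)) a).snd =
      tapply Td xs a + ∑ k : Fin (q + 1), ∑ g : Fin (q + 1) → Fin n,
        Ts (Fin.cons a g) * ((∏ l ∈ Finset.univ.erase k, xs (g l)) * xd (g k)) := by
  rw [tapply, snd_sum]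
  have key : ∀ g : Fin (q + 1) → Fin n,
      ((inl (Ts (Fin.cons a g)) + inr (Td (Fin.cons a g)) : DualNumber ℝ) *
        ∏ l, (inl (xs (g l)) + inr (xd (g l)) : DualNumber ℝ)).snd =
      Td (Fin.cons a g) * ∏ l, xs (g l) +
        ∑ k : Fin (q + 1),
          Ts (Fin.cons a g) * ((∏ l ∈ Finset.univ.erase k, xs (g l)) * xd (g k)) := by
    intro g
    rw [snd_mul, snd_prod', fst_prod']
    simp only [fst_add, fst_inl, fst_inr, snd_add, snd_inl, snd_inr, add_zero, zero_add,
      op_smul_eq_smul, smul_eq_mul]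
    rw [Finset.mul_sum, add_comm]
    congr 1
    · exact mul_comm _ _
    · exact Finset.sum_congr rfl fun k _ => by ring
  rw [Finset.sum_congr rfl (fun g _ => key g), Finset.sum_add_distrib]
  congr 1
  rw [Finset.sum_comm]

lemma rhs_dual {q : ℕ} (ls ld a b : ℝ) :
    ((inl ls + inr ld : DualNumber ℝ) * (inl a + inr b) ^ (q + 1)).fst = ls * a ^ (q + 1) ∧
    ((inl ls + inr ld : DualNumber ℝ) * (inl a + inr b) ^ (q + 1)).snd =
      ld * a ^ (q + 1) + ((q : ℝ) + 1) * (ls * (a ^ q * b)) := by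
  constructor
  · simp [fst_mul, fst_pow]
  · rw [snd_mul, snd_pow, fst_pow]
    simp only [fst_add, fst_inl, fst_inr, snd_add, snd_inl, snd_inr, add_zero, zero_add,
      op_smul_eq_smul, smul_eq_mul, nsmul_eq_mul, Nat.cast_add, Nat.cast_one, Nat.pred_succ]
    ring

lemma mulVec_Ak {n q : ℕ} (T : (Fin (q + 2) → Fin n) → ℝ) (x : Fin n → ℝ)
    (k : Fin (q + 1)) (z : Fin n → ℝ) (a : Fin n) :
    (Ak T x k).mulVec z a =
      ∑ g : Fin (q + 1) → Fin n,
        T (Fin.cons a g) * ((∏ l ∈ Finset.univ.erase k, x (g l)) * z (g k)) := by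
  rw [Matrix.mulVec, dotProduct]
  rw [← Finset.sum_fiberwise_of_maps_to (fun g _ => Finset.mem_univ (g k))
    (fun g => T (Fin.cons a g) * ((∏ l ∈ Finset.univ.erase k, x (g l)) * z (g k)))]
  refine Finset.sum_congr rfl fun j _ => ?_
  rw [Ak, Matrix.of_apply, Finset.sum_mul]
  refine Finset.sum_congr rfl fun g hg => ?_
  rw [(Finset.mem_filter.mp hg).2]
  ring

lemma mulVec_M_apply {n q : ℕ} (T : (Fin (q + 2) → Fin n) → ℝ) (x : Fin n → ℝ)
    (ls : ℝ) (z : Fin n → ℝ) (a : Fin n) :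
    (Mmat T x ls).mulVec z a =
      ((q : ℝ) + 1) * (ls * (x a ^ q * z a)) -
      ∑ k : Fin (q + 1), ∑ g : Fin (q + 1) → Fin n,
        T (Fin.cons a g) * ((∏ l ∈ Finset.univ.erase k, x (g l)) * z (g k)) := by
  rw [Mmat, Matrix.sub_mulVec]
  rw [Pi.sub_apply]
  congr 1
  · rw [Matrix.smul_mulVec, Matrix.smul_mulVec, Matrix.diagonal_pow,
      Pi.smul_apply, Pi.smul_apply, Matrix.mulVec_diagonal, smul_eq_mul, smul_eq_mul,
      Pi.pow_apply]
  · have h : (∑ k : Fin (q + 1), Ak T x k).mulVec z a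
        = ∑ k : Fin (q + 1), (Ak T x k).mulVec z a := by
      rw [Matrix.mulVec, dotProduct]
      simp only [Matrix.sum_apply, Finset.sum_mul]
      rw [Finset.sum_comm]
      rfl
    rw [h]
    exact Finset.sum_congr rfl fun k _ => mulVec_Ak T x k z a

lemma ker_M {n q : ℕ} (Ts : (Fin (q + 2) → Fin n) → ℝ) [Nonempty (Fin n)]
    (hnn : ∀ f, 0 ≤ Ts f) (hwi : WeaklyIrreducible Ts)
    (ls : ℝ) (xs : Fin n → ℝ) (hxs : ∀ i, 0 < xs i)
    (hMxs : (Mmat Ts xs ls).mulVec xs = 0)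
    (z : Fin n → ℝ) (hz : (Mmat Ts xs ls).mulVec z = 0) : ∃ t : ℝ, z = t • xs := by
  obtain ⟨i0, -, hmin⟩ := Finset.exists_min_image Finset.univ (fun a => z a / xs a)
    ⟨Classical.arbitrary _, Finset.mem_univ _⟩
  set t := z i0 / xs i0 with ht
  set z' := fun a => z a - t * xs a with hz'def
  have hnn' : ∀ a, 0 ≤ z' a := by
    intro a
    have h1 : t ≤ z a / xs a := hmin a (Finset.mem_univ a)
    have h2 : t * xs a ≤ z a := (le_div_iff₀ (hxs a)).mp h1
    simp only [hz'def]
    linarith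
  have hz'0 : z' i0 = 0 := by
    simp only [hz'def, ht]
    rw [div_mul_cancel₀ _ (hxs i0).ne', sub_self]
  have hMz' : (Mmat Ts xs ls).mulVec z' = 0 := by
    have hzz : z' = z - t • xs := by funext a; simp [hz'def]
    rw [hzz, Matrix.mulVec_sub, Matrix.mulVec_smul, hz, hMxs]
    simp
  have hstep : ∀ a b, z' a = 0 →
      (∃ g : Fin (q + 1) → Fin n, Ts (Fin.cons a g) ≠ 0 ∧ ∃ l, g l = b) → z' b = 0 := by
    rintro a b ha ⟨g0, hg0, l0, hl0⟩
    have h0 := congrFun hMz' a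
    rw [mulVec_M_apply, ha] at h0
    simp only [mul_zero, zero_sub, neg_eq_zero, Pi.zero_apply] at h0
    have hnneg : ∀ k ∈ (Finset.univ : Finset (Fin (q + 1))),
        0 ≤ ∑ g : Fin (q + 1) → Fin n,
          Ts (Fin.cons a g) * ((∏ l ∈ Finset.univ.erase k, xs (g l)) * z' (g k)) := by
      intro k _
      refine Finset.sum_nonneg fun g _ => mul_nonneg (hnn _) (mul_nonneg ?_ (hnn' _))
      exact Finset.prod_nonneg fun l _ => (hxs _).le
    have hk0 := (Finset.sum_eq_zero_iff_of_nonneg hnneg).mp h0 l0 (Finset.mem_univ _)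
    have hg' : ∀ g ∈ (Finset.univ : Finset ((Fin (q + 1)) → Fin n)),
        0 ≤ Ts (Fin.cons a g) * ((∏ l ∈ Finset.univ.erase l0, xs (g l)) * z' (g l0)) :=
      fun g _ => mul_nonneg (hnn _) (mul_nonneg
        (Finset.prod_nonneg fun l _ => (hxs _).le) (hnn' _))
    have hterm := (Finset.sum_eq_zero_iff_of_nonneg hg').mp hk0 g0 (Finset.mem_univ _)
    have hTs : 0 < Ts (Fin.cons a g0) := lt_of_le_of_ne (hnn _) (Ne.symm hg0)
    have hp : 0 < ∏ l ∈ Finset.univ.erase l0, xs (g0 l) :=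
      Finset.prod_pos fun l _ => hxs _
    rcases mul_eq_zero.mp hterm with h | h
    · exact absurd h hTs.ne'
    rcases mul_eq_zero.mp h with h | h
    · exact absurd h hp.ne'
    · rwa [hl0] at h
  have hall : ∀ b, z' b = 0 := by
    intro b
    induction hwi i0 b with
    | refl => exact hz'0
    | tail _ harc ih => exact hstep _ _ ih harc
  refine ⟨t, funext fun a => ?_⟩
  have h := hall a
  simp only [hz'def] at h
  simp only [Pi.smul_apply, smul_eq_mul]
  linarith

lemma exists_left_vec {n q : ℕ} (Ts : (Fin (q + 2) → Fin n) → ℝ)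
    (ls : ℝ) (xs : Fin n → ℝ) (hxs : ∀ i, 0 < xs i)
    (hMxs : (Mmat Ts xs ls).mulVec xs = 0)
    (hker : ∀ z, (Mmat Ts xs ls).mulVec z = 0 → ∃ t : ℝ, z = t • xs)
    (i j : Fin n) (hij : xs i = xs j) :
    ∃ y, Matrix.vecMul y (Mmat Ts xs ls) = Pi.single i 1 - Pi.single j 1 := by
  classical
  set M := Mmat Ts xs ls with hM
  have hxsne : xs ≠ 0 := fun h => (hxs i).ne' (congrFun h i)
  let φ : (Fin n → ℝ) →ₗ[ℝ] ℝ :=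
    { toFun := fun v => v ⬝ᵥ xs
      map_add' := fun u v => add_dotProduct u v xs
      map_smul' := fun c v => smul_dotProduct c v xs }
  have hxx : (0:ℝ) < xs ⬝ᵥ xs := by
    refine Finset.sum_pos (fun l _ => mul_pos (hxs l) (hxs l)) ⟨i, Finset.mem_univ i⟩
  have hφsurj : LinearMap.range φ = ⊤ := by
    rw [LinearMap.range_eq_top]
    intro r
    refine ⟨(r / (xs ⬝ᵥ xs)) • xs, ?_⟩
    show ((r / (xs ⬝ᵥ xs)) • xs) ⬝ᵥ xs = r
    rw [smul_dotProduct, smul_eq_mul, div_mul_cancel₀ _ hxx.ne']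
  have hrn1 : 1 + Module.finrank ℝ (LinearMap.ker φ) = n := by
    have := LinearMap.finrank_range_add_finrank_ker φ
    rw [hφsurj, finrank_top, Module.finrank_self, Module.finrank_pi] at this
    simpa using this
  have hkerM : LinearMap.ker M.mulVecLin = Submodule.span ℝ {xs} := by
    apply le_antisymm
    · intro z hz
      obtain ⟨t, hzt⟩ := hker z (by simpa [Matrix.mulVecLin_apply] using hz)
      exact Submodule.mem_span_singleton.mpr ⟨t, hzt.symm⟩
    · rw [Submodule.span_le, Set.singleton_subset_iff]
      show M.mulVecLin xs = 0
      simpa [Matrix.mulVecLin_apply] using hMxs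
  have hkerM1 : Module.finrank ℝ (LinearMap.ker M.mulVecLin) = 1 := by
    rw [hkerM]; exact finrank_span_singleton hxsne
  have hrn2 : Module.finrank ℝ (LinearMap.range M.mulVecLin) + 1 = n := by
    have := LinearMap.finrank_range_add_finrank_ker M.mulVecLin
    rw [hkerM1, Module.finrank_pi] at this
    simpa using this
  have hrankT : Mᵀ.rank = M.rank := Matrix.rank_transpose M
  have hle : LinearMap.range Mᵀ.mulVecLin ≤ LinearMap.ker φ := by
    rintro v ⟨y, rfl⟩
    show (Mᵀ.mulVecLin y) ⬝ᵥ xs = 0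
    rw [Matrix.mulVecLin_apply, Matrix.mulVec_transpose, ← Matrix.dotProduct_mulVec,
      hMxs, dotProduct_zero]
  have hfr : Module.finrank ℝ (LinearMap.range Mᵀ.mulVecLin) =
      Module.finrank ℝ (LinearMap.ker φ) := by
    have h1 : Mᵀ.rank = Module.finrank ℝ (LinearMap.range Mᵀ.mulVecLin) := rfl
    have h2 : M.rank = Module.finrank ℝ (LinearMap.range M.mulVecLin) := rfl
    omega
  have heq : LinearMap.range Mᵀ.mulVecLin = LinearMap.ker φ :=
    Submodule.eq_of_le_of_finrank_eq hle hfr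
  have hmem : (Pi.single i 1 - Pi.single j 1 : Fin n → ℝ) ∈ LinearMap.ker φ := by
    show (Pi.single i 1 - Pi.single j 1 : Fin n → ℝ) ⬝ᵥ xs = 0
    rw [sub_dotProduct, single_dotProduct, single_dotProduct,
      one_mul, one_mul, hij, sub_self]
  rw [← heq] at hmem
  obtain ⟨y, hy⟩ := hmem
  exact ⟨y, by simpa [Matrix.mulVecLin_apply] using hy⟩

/-- In the setup of Theorem 3.2, if λ = λ_s + λ_d ε has a positive
dual eigenvector x = x_s + x_d ε and (x_s)_i = (x_s)_j, then
(x_d)_i − (x_d)_j = (e_i − e_j)ᵀ M# (A_d − λ_d I) x_s^{m−1}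
                  = (e_i − e_j)ᵀ M⁽¹⁾ (A_d − λ_d I) x_s^{m−1}
for the group inverse M# and any {1}-inverse M⁽¹⁾ of M. -/
theorem stmt16 {n q : ℕ} (Ts Td : (Fin (q + 2) → Fin n) → ℝ)
    (hnn : ∀ f, 0 ≤ Ts f) (hwi : WeaklyIrreducible Ts)
    (ls ld : ℝ) (xs xd : Fin n → ℝ) (hls : 0 < ls) (hxs : ∀ i, 0 < xs i)
    (heigdual : tapply (fun f => (inl (Ts f) + inr (Td f) : DualNumber ℝ))
        (fun i => inl (xs i) + inr (xd i)) =
      fun i => (inl ls + inr ld) * (inl (xs i) + inr (xd i)) ^ (q + 1))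
    (i j : Fin n) (hij : xs i = xs j) :
    (∀ G : Matrix (Fin n) (Fin n) ℝ,
        Mmat Ts xs ls * G * Mmat Ts xs ls = Mmat Ts xs ls →
        G * Mmat Ts xs ls * G = G →
        Mmat Ts xs ls * G = G * Mmat Ts xs ls →
        xd i - xd j = (Pi.single i 1 - Pi.single j 1) ⬝ᵥ
          G.mulVec (fun r => tapply Td xs r - ld * xs r ^ (q + 1))) ∧
    (∀ X : Matrix (Fin n) (Fin n) ℝ,
        Mmat Ts xs ls * X * Mmat Ts xs ls = Mmat Ts xs ls →
        xd i - xd j = (Pi.single i 1 - Pi.single j 1) ⬝ᵥ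
          X.mulVec (fun r => tapply Td xs r - ld * xs r ^ (q + 1))) := by
  classical
  have hne : Nonempty (Fin n) := ⟨i⟩
  have hfst : ∀ a, tapply Ts xs a = ls * xs a ^ (q + 1) := by
    intro a
    have h := congrFun heigdual a
    have hf := congrArg TrivSqZeroExt.fst h
    rwa [tapply_dual_fst, (rhs_dual ls ld (xs a) (xd a)).1] at hf
  have hsnd : ∀ a, tapply Td xs a + ∑ k : Fin (q + 1), ∑ g : Fin (q + 1) → Fin n,
      Ts (Fin.cons a g) * ((∏ l ∈ Finset.univ.erase k, xs (g l)) * xd (g k)) =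
      ld * xs a ^ (q + 1) + ((q : ℝ) + 1) * (ls * (xs a ^ q * xd a)) := by
    intro a
    have h := congrFun heigdual a
    have hf := congrArg TrivSqZeroExt.snd h
    rwa [tapply_dual_snd, (rhs_dual ls ld (xs a) (xd a)).2] at hf
  have hMxs : (Mmat Ts xs ls).mulVec xs = 0 := by
    funext a
    rw [mulVec_M_apply, Pi.zero_apply]
    have hin : ∀ k : Fin (q + 1), ∑ g : Fin (q + 1) → Fin n,
        Ts (Fin.cons a g) * ((∏ l ∈ Finset.univ.erase k, xs (g l)) * xs (g k)) =
        tapply Ts xs a := by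
      intro k
      rw [tapply]
      refine Finset.sum_congr rfl fun g _ => ?_
      rw [Finset.prod_erase_mul _ _ (Finset.mem_univ k)]
    rw [Finset.sum_congr rfl (fun k _ => hin k), Finset.sum_const, Finset.card_univ,
      Fintype.card_fin, hfst a, nsmul_eq_mul]
    push_cast
    ring
  have hMxd : (Mmat Ts xs ls).mulVec xd =
      fun r => tapply Td xs r - ld * xs r ^ (q + 1) := by
    funext r
    rw [mulVec_M_apply]
    have h := hsnd r
    linarith
  have key : ∀ X : Matrix (Fin n) (Fin n) ℝ,
      Mmat Ts xs ls * X * Mmat Ts xs ls = Mmat Ts xs ls →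
      xd i - xd j = (Pi.single i 1 - Pi.single j 1) ⬝ᵥ
        X.mulVec (fun r => tapply Td xs r - ld * xs r ^ (q + 1)) := by
    intro X hX
    obtain ⟨y, hy⟩ := exists_left_vec Ts ls xs hxs hMxs
      (ker_M Ts hnn hwi ls xs hxs hMxs) i j hij
    rw [← hMxd, Matrix.mulVec_mulVec, Matrix.dotProduct_mulVec, ← hy,
      Matrix.vecMul_vecMul, ← mul_assoc, hX, hy, sub_dotProduct,
      single_dotProduct, single_dotProduct, one_mul, one_mul]
  exact ⟨fun G hG _ _ => key G hG, fun X hX => key X hX⟩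
end

section
/- For a 2-uniform case: let A_s be the adjacency matrix of a connected graph G with Perron value λ_s and positive unit Perron vector x_s, and let A_d be any real symmetric perturbation matrix. Then the dual matrix A_s + A_d ε has dual eigenvalue λ_s + λ_d ε with λ_d = x_sᵀ A_d x_s, and the unique eigenvector x_s + x_d ε with x_sᵀ x_d = 0 has x_d = (λ_s I − A_s)# (A_d − λ_d I) x_s, where # denotes the group inverse. -/
open Matrix TrivSqZeroExt

lemma kerlem {n : ℕ} (G : SimpleGraph (Fin n)) [DecidableRel G.Adj]
    (hconn : G.Connected) (ls : ℝ) (xs : Fin n → ℝ)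
    (heig : (G.adjMatrix ℝ).mulVec xs = ls • xs) (hxs : ∀ i, 0 < xs i)
    (v : Fin n → ℝ) (hv : (G.adjMatrix ℝ).mulVec v = ls • v) :
    ∃ c : ℝ, v = c • xs := by
  have hne : Nonempty (Fin n) := hconn.nonempty
  set t : ℝ := Finset.univ.inf' (Finset.univ_nonempty) (fun i => v i / xs i) with ht
  refine ⟨t, ?_⟩
  set u : Fin n → ℝ := v - t • xs with hu
  have hunn : ∀ i, 0 ≤ u i := by
    intro i
    have h1 : t ≤ v i / xs i := Finset.inf'_le _ (Finset.mem_univ i)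
    have := (le_div_iff₀ (hxs i)).mp h1
    simp only [hu, Pi.sub_apply, Pi.smul_apply, smul_eq_mul]; linarith
  obtain ⟨i0, _, hi0⟩ := Finset.exists_mem_eq_inf' (Finset.univ_nonempty) (fun i => v i / xs i)
  have hti0 : t = v i0 / xs i0 := hi0
  have hui0 : u i0 = 0 := by
    show v i0 - t * xs i0 = 0
    rw [hti0, div_mul_cancel₀ _ (hxs i0).ne', sub_self]
  have hAu : (G.adjMatrix ℝ).mulVec u = ls • u := by
    rw [hu, Matrix.mulVec_sub, Matrix.mulVec_smul, heig, hv, smul_sub, smul_comm]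
  have step : ∀ i, u i = 0 → ∀ j, G.Adj i j → u j = 0 := by
    intro i hi j hij
    have h0 : ∑ x, G.adjMatrix ℝ i x * u x = 0 := by
      have h := congrFun hAu i
      simp only [Matrix.mulVec, dotProduct, Pi.smul_apply, smul_eq_mul] at h
      rw [h, hi, mul_zero]
    have hall := (Finset.sum_eq_zero_iff_of_nonneg (fun x _ => by
      by_cases h : G.Adj i x <;>
        simp [SimpleGraph.adjMatrix_apply, h, hunn x])).mp h0 j (Finset.mem_univ j)
    simpa [SimpleGraph.adjMatrix_apply, hij] using hall
  have walk : ∀ a b : Fin n, G.Walk a b → u a = 0 → u b = 0 := by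
    intro a b p
    induction p with
    | nil => exact id
    | cons h p ih => intro ha; exact ih (step _ ha _ h)
  have hu0 : ∀ j, u j = 0 := fun j => walk i0 j (hconn i0 j).some hui0
  funext i
  have := hu0 i
  simp only [hu, Pi.sub_apply, Pi.smul_apply, smul_eq_mul] at this ⊢
  linarith

lemma dual_mulVec_aux {n : ℕ} (A B : Matrix (Fin n) (Fin n) ℝ) (u v : Fin n → ℝ) (i : Fin n) :
    (Matrix.of fun i j => (inl (A i j) + inr (B i j) : DualNumber ℝ)).mulVec
      (fun i => inl (u i) + inr (v i)) i
    = inl ((A.mulVec u) i) + inr ((A.mulVec v + B.mulVec u) i) := by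
  ext <;> simp [Matrix.mulVec, dotProduct, fst_sum, snd_sum, fst_mul, snd_mul,
    Finset.sum_add_distrib, mul_comm]

lemma dual_mul_aux (a b c d : ℝ) :
    (inl a + inr b : DualNumber ℝ) * (inl c + inr d) = inl (a*c) + inr (a*d + b*c) := by
  ext <;> simp [mul_comm]

/-- Graph (2-uniform) case: for the adjacency matrix A_s of a
connected graph G with Perron value λ_s and positive unit Perron vector x_s, and any
symmetric perturbation A_d, the dual matrix A_s + A_d ε has dual eigenvalue
λ_s + λ_d ε with λ_d = x_sᵀ A_d x_s, and the unique eigenvector x_s + x_d ε with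
x_sᵀ x_d = 0 has x_d = (λ_s I − A_s)# (A_d − λ_d I) x_s, where # is the group
inverse. -/
theorem stmt19 {n : ℕ} (G : SimpleGraph (Fin n)) [DecidableRel G.Adj]
    (hconn : G.Connected)
    (ls : ℝ) (xs : Fin n → ℝ)
    (heig : (G.adjMatrix ℝ).mulVec xs = ls • xs)
    (hxs : ∀ i, 0 < xs i) (hunit : xs ⬝ᵥ xs = 1)
    (hmax : ∀ μ : ℝ, (∃ v : Fin n → ℝ, v ≠ 0 ∧ (G.adjMatrix ℝ).mulVec v = μ • v) →
      |μ| ≤ ls)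
    (Ad : Matrix (Fin n) (Fin n) ℝ) (hAd : Ad.IsSymm)
    (Gi : Matrix (Fin n) (Fin n) ℝ)
    (hG1 : (ls • (1 : Matrix (Fin n) (Fin n) ℝ) - G.adjMatrix ℝ) * Gi *
        (ls • (1 : Matrix (Fin n) (Fin n) ℝ) - G.adjMatrix ℝ) =
      ls • (1 : Matrix (Fin n) (Fin n) ℝ) - G.adjMatrix ℝ)
    (hG2 : Gi * (ls • (1 : Matrix (Fin n) (Fin n) ℝ) - G.adjMatrix ℝ) * Gi = Gi)
    (hG3 : (ls • (1 : Matrix (Fin n) (Fin n) ℝ) - G.adjMatrix ℝ) * Gi =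
      Gi * (ls • (1 : Matrix (Fin n) (Fin n) ℝ) - G.adjMatrix ℝ)) :
    (Matrix.of fun i j =>
        (inl (G.adjMatrix ℝ i j) + inr (Ad i j) : DualNumber ℝ)).mulVec
      (fun i => inl (xs i) +
        inr (Gi.mulVec ((Ad - (xs ⬝ᵥ Ad.mulVec xs) • 1).mulVec xs) i)) =
      (fun i => (inl ls + inr (xs ⬝ᵥ Ad.mulVec xs)) *
        (inl (xs i) + inr (Gi.mulVec ((Ad - (xs ⬝ᵥ Ad.mulVec xs) • 1).mulVec xs) i))) ∧
    xs ⬝ᵥ Gi.mulVec ((Ad - (xs ⬝ᵥ Ad.mulVec xs) • 1).mulVec xs) = 0 ∧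
    ∀ xd : Fin n → ℝ,
      ((Matrix.of fun i j =>
            (inl (G.adjMatrix ℝ i j) + inr (Ad i j) : DualNumber ℝ)).mulVec
          (fun i => inl (xs i) + inr (xd i)) =
        (fun i => (inl ls + inr (xs ⬝ᵥ Ad.mulVec xs)) * (inl (xs i) + inr (xd i))) ∧
        xs ⬝ᵥ xd = 0) →
      xd = Gi.mulVec ((Ad - (xs ⬝ᵥ Ad.mulVec xs) • 1).mulVec xs) := by
  set A := G.adjMatrix ℝ with hA
  set M : Matrix (Fin n) (Fin n) ℝ := ls • 1 - A with hM
  set ld : ℝ := xs ⬝ᵥ Ad.mulVec xs with hld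
  set b : Fin n → ℝ := (Ad - ld • 1).mulVec xs with hb
  have hMxs : M.mulVec xs = 0 := by
    rw [hM, Matrix.sub_mulVec, Matrix.smul_mulVec, Matrix.one_mulVec, heig, sub_self]
  have hMsymm : Mᵀ = M := by
    rw [hM, Matrix.transpose_sub, Matrix.transpose_smul, Matrix.transpose_one, hA,
      SimpleGraph.transpose_adjMatrix]
  have hxsM : Matrix.vecMul xs M = 0 := by
    rw [← hMsymm, Matrix.vecMul_transpose, hMxs]
  have hker : ∀ w : Fin n → ℝ, M.mulVec w = 0 → xs ⬝ᵥ w = 0 → w = 0 := by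
    intro w hw hxw
    have hAw : A.mulVec w = ls • w := by
      rw [hM, Matrix.sub_mulVec, Matrix.smul_mulVec, Matrix.one_mulVec,
        sub_eq_zero] at hw
      exact hw.symm
    obtain ⟨c, hc⟩ := kerlem G hconn ls xs heig hxs w hAw
    rw [hc, dotProduct_smul, hunit, smul_eq_mul, mul_one] at hxw
    rw [hc, hxw, zero_smul]
  have hxsb : xs ⬝ᵥ b = 0 := by
    rw [hb, Matrix.sub_mulVec, dotProduct_sub, Matrix.smul_mulVec, Matrix.one_mulVec,
      dotProduct_smul, hunit, smul_eq_mul, mul_one, ← hld, sub_self]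
  have hMMGi : M * (M * Gi) = M := by rw [hG3, ← Matrix.mul_assoc, hG1]
  have hfix : M.mulVec (Gi.mulVec b) = b := by
    have h1 : M.mulVec (b - (M * Gi).mulVec b) = 0 := by
      rw [Matrix.mulVec_sub, Matrix.mulVec_mulVec b M (M * Gi), hMMGi, sub_self]
    have h2 : xs ⬝ᵥ (b - (M * Gi).mulVec b) = 0 := by
      rw [dotProduct_sub, hxsb, Matrix.dotProduct_mulVec, ← Matrix.vecMul_vecMul,
        hxsM, Matrix.zero_vecMul, zero_dotProduct, sub_self]
    have h3 := hker _ h1 h2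
    rw [sub_eq_zero] at h3
    rw [Matrix.mulVec_mulVec, ← h3]
  have hGiMGG : Gi = M * (Gi * Gi) := by
    conv_lhs => rw [← hG2]
    rw [← hG3, Matrix.mul_assoc]
  have part2 : xs ⬝ᵥ Gi.mulVec b = 0 := by
    conv_lhs => rw [hGiMGG]
    rw [← Matrix.mulVec_mulVec, Matrix.dotProduct_mulVec, hxsM, zero_dotProduct]
  have hbexp : b = Ad.mulVec xs - ld • xs := by
    rw [hb, Matrix.sub_mulVec, Matrix.smul_mulVec, Matrix.one_mulVec]
  have key : ls • (Gi.mulVec b) - A.mulVec (Gi.mulVec b) = Ad.mulVec xs - ld • xs := by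
    have h := hfix
    rw [hM, Matrix.sub_mulVec, Matrix.smul_mulVec, Matrix.one_mulVec, hbexp] at h
    rw [← hbexp] at h ⊢
    exact h
  refine ⟨?_, part2, ?_⟩
  · funext i
    rw [dual_mulVec_aux A Ad xs (Gi.mulVec b) i, dual_mul_aux]
    have h1 : (A.mulVec xs) i = ls * xs i := by rw [heig]; rfl
    have h2 : (A.mulVec (Gi.mulVec b)) i + (Ad.mulVec xs) i
        = ls * (Gi.mulVec b) i + ld * xs i := by
      have := congrFun key i
      simp only [Pi.sub_apply, Pi.smul_apply, smul_eq_mul] at this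
      linarith
    rw [Pi.add_apply, h2, h1]
  · rintro xd ⟨hEq, horth⟩
    have hcomp : ∀ i, (A.mulVec xd) i + (Ad.mulVec xs) i = ls * xd i + ld * xs i := by
      intro i
      have h := congrFun hEq i
      rw [dual_mulVec_aux A Ad xs xd i, dual_mul_aux] at h
      have := congrArg TrivSqZeroExt.snd h
      simpa using this
    have hMxd : M.mulVec xd = b := by
      funext i
      rw [hM, Matrix.sub_mulVec, Matrix.smul_mulVec, Matrix.one_mulVec, hbexp]
      simp only [Pi.sub_apply, Pi.smul_apply, smul_eq_mul]
      linarith [hcomp i]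
    have hd : xd - Gi.mulVec b = 0 := by
      apply hker
      · rw [Matrix.mulVec_sub, hMxd, hfix, sub_self]
      · rw [dotProduct_sub, horth, part2, sub_self]
    rw [sub_eq_zero] at hd
    exact hd
end
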